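/- arXiv:2511.05917 — 5 statements merged into one kernel-verified Lean document; each statement's English description precedes it below -/
import Mathlib

section
/- Let G = {g_1 < ... < g_r} and H = {h_1 < ... < h_s} be nonempty subsets of [n]. If there exists ℓ with 1 ≤ ℓ ≤ n such that |G ∩ [ℓ]| + |H ∩ [ℓ]| > ℓ, then there exist indices p ∈ [r] and q ∈ [s] such that g_p = h_q = p + q − 1. -/
/-!
Take ℓ minimal with ℓ < μ_G(ℓ) + μ_H(ℓ); then ℓ ≥ 1 and μ_G(ℓ-1) + μ_H(ℓ-1) ≤ ℓ - 1. Each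
counting function grows by at most one per step, so both grow at ℓ: ℓ ∈ G ∩ H and
μ_G(ℓ-1) + μ_H(ℓ-1) = ℓ - 1. As an element of G, ℓ has exactly p - 1 := μ_G(ℓ-1) predecessors, so
ℓ = g_p, likewise ℓ = h_q with q - 1 := μ_H(ℓ-1), and p + q - 1 = ℓ.
-/

/-- The `i`-th smallest element (0-indexed) of a finite set of naturals. -/
def nth (A : Finset ℕ) (i : ℕ) : ℕ := (Finset.sort A (· ≤ ·)).getD i 0

open Finset

theorem nth_eq_nat_nth (A : Finset ℕ) (i : ℕ) : nth A i = Nat.nth (· ∈ A) i := by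
  rw [Nat.nth_eq_getD_sort (p := (· ∈ A)) A.finite_toSet]
  simp [nth]

theorem nth_count_of_mem {A : Finset ℕ} {a : ℕ} (ha : a ∈ A) :
    nth A (Nat.count (· ∈ A) a) = a := by
  rw [nth_eq_nat_nth, Nat.nth_count ha]

theorem count_lt_card_of_mem {A : Finset ℕ} {a : ℕ} (ha : a ∈ A) : Nat.count (· ∈ A) a < #A := by
  simpa using Nat.count_lt_card A.finite_toSet ha

theorem card_inter_Icc_one_eq_count {A : Finset ℕ} (h0 : 0 ∉ A) (ℓ : ℕ) :
    #(A ∩ Icc 1 ℓ) = Nat.count (· ∈ A) (ℓ + 1) := by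
  rw [Nat.count_eq_card_filter_range]
  congr 1
  ext x
  simp only [mem_inter, mem_Icc, mem_filter, mem_range]
  constructor
  · rintro ⟨hx, -, hxℓ⟩
    exact ⟨by omega, hx⟩
  · rintro ⟨hxℓ, hx⟩
    exact ⟨hx, Nat.pos_of_ne_zero (by rintro rfl; exact h0 hx), by omega⟩

theorem Nat.exists_count_add_count_add_one_eq {p q : ℕ → Prop} [DecidablePred p]
    [DecidablePred q] (hp : ¬p 0) (hq : ¬q 0) {ℓ : ℕ}
    (h : ℓ < count p (ℓ + 1) + count q (ℓ + 1)) :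
    ∃ k, p k ∧ q k ∧ count p k + count q k + 1 = k := by
  induction ℓ with
  | zero => simp [count_succ, hp, hq] at h
  | succ m ih =>
    by_cases hm : m < count p (m + 1) + count q (m + 1)
    · exact ih hm
    · rw [count_succ p (m + 1), count_succ q (m + 1)] at h
      refine ⟨m + 1, ?_, ?_, ?_⟩ <;> split_ifs at h <;> omega

theorem stmt_3_general (n : ℕ) (G H : Finset ℕ)
    (hG : G ⊆ Finset.Icc 1 n) (hH : H ⊆ Finset.Icc 1 n)
    (h : ∃ ℓ, 1 ≤ ℓ ∧ ℓ ≤ n ∧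
      ℓ < (G ∩ Finset.Icc 1 ℓ).card + (H ∩ Finset.Icc 1 ℓ).card) :
    ∃ p < G.card, ∃ q < H.card, nth G p = nth H q ∧ nth G p = p + q + 1 := by
  obtain ⟨ℓ, -, -, hℓ⟩ := h
  have hG0 : 0 ∉ G := fun h0 => by simpa using hG h0
  have hH0 : 0 ∉ H := fun h0 => by simpa using hH h0
  rw [card_inter_Icc_one_eq_count hG0, card_inter_Icc_one_eq_count hH0] at hℓ
  obtain ⟨k, hkG, hkH, hk⟩ := Nat.exists_count_add_count_add_one_eq hG0 hH0 hℓ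
  refine ⟨_, count_lt_card_of_mem hkG, _, count_lt_card_of_mem hkH, ?_, ?_⟩
  · rw [nth_count_of_mem hkG, nth_count_of_mem hkH]
  · rw [nth_count_of_mem hkG, hk]

/-- If μ_G(ℓ) + μ_H(ℓ) > ℓ for some 1 ≤ ℓ ≤ n, then g_p = h_q = p + q - 1
for some 1-based indices p, q (here 0-based: nth G p = nth H q = p + q + 1). -/
theorem stmt_3 (n : ℕ) (G H : Finset ℕ)
    (hG : G ⊆ Finset.Icc 1 n) (hH : H ⊆ Finset.Icc 1 n)
    (hGne : G.Nonempty) (hHne : H.Nonempty)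
    (h : ∃ ℓ, 1 ≤ ℓ ∧ ℓ ≤ n ∧
      ℓ < (G ∩ Finset.Icc 1 ℓ).card + (H ∩ Finset.Icc 1 ℓ).card) :
    ∃ p < G.card, ∃ q < H.card, nth G p = nth H q ∧ nth G p = p + q + 1 :=
  stmt_3_general n G H hG hH h
end

section
/- Let G = {g_1 < ... < g_r} ⊆ [n]. If there exists ℓ with 1 ≤ ℓ ≤ n such that 2·|G ∩ [ℓ]| > ℓ, then there exists an index p with 1 ≤ p ≤ r such that g_p = 2p − 1. -/
open Finset

lemma nth_eq_getElem (A : Finset ℕ) {p : ℕ} (hp : p < #A) :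
    nth A p = (A.sort (· ≤ ·))[p]'(by rwa [length_sort]) :=
  List.getD_eq_getElem _ _ _

lemma nth_mem (A : Finset ℕ) {p : ℕ} (hp : p < #A) : nth A p ∈ A := by
  rw [nth_eq_getElem A hp, ← mem_sort (· ≤ ·)]
  exact List.getElem_mem _

lemma nth_lt_nth (A : Finset ℕ) {p q : ℕ} (hpq : p < q) (hq : q < #A) :
    nth A p < nth A q := by
  rw [nth_eq_getElem A (hpq.trans hq), nth_eq_getElem A hq]
  exact (sortedLT_sort A).strictMono_get (show (⟨p, _⟩ : Fin _) < ⟨q, _⟩ from hpq)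

lemma exists_nth_eq (A : Finset ℕ) {x : ℕ} (hx : x ∈ A) : ∃ p < #A, nth A p = x := by
  obtain ⟨p, hp, rfl⟩ := List.mem_iff_getElem.1 ((mem_sort (· ≤ ·)).2 hx)
  rw [length_sort] at hp
  exact ⟨p, hp, nth_eq_getElem A hp⟩

lemma two_mul_add_two_le_nth {A : Finset ℕ} (hA : 0 ∉ A)
    (hodd : ∀ p < #A, nth A p ≠ 2 * p + 1) : ∀ p < #A, 2 * p + 2 ≤ nth A p := by
  intro p hp
  induction p with
  | zero =>
    have hpos : nth A 0 ≠ 0 := fun h => hA (h ▸ nth_mem A hp)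
    have := hodd 0 hp
    omega
  | succ q ih =>
    have hlt := nth_lt_nth A (Nat.lt_add_one q) hp
    have := ih (by omega)
    have := hodd (q + 1) hp
    omega

lemma two_mul_card_filter_le {A : Finset ℕ} (hA : ∀ p < #A, 2 * p + 2 ≤ nth A p) (ℓ : ℕ) :
    2 * #{x ∈ A | x ≤ ℓ} ≤ ℓ := by
  have hsub : {x ∈ A | x ≤ ℓ} ⊆ (range (ℓ / 2)).image (nth A) := by
    intro x hx
    obtain ⟨hxA, hxℓ⟩ := mem_filter.1 hx
    obtain ⟨p, hp, rfl⟩ := exists_nth_eq A hxA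
    have := hA p hp
    exact mem_image.2 ⟨p, mem_range.2 (by omega), rfl⟩
  have := (card_le_card hsub).trans card_image_le
  rw [card_range] at this
  omega

theorem stmt_4_general (n : ℕ) (G : Finset ℕ)
    (hG : G ⊆ Finset.Icc 1 n)
    (h : ∃ ℓ, 1 ≤ ℓ ∧ ℓ ≤ n ∧ ℓ < 2 * (G ∩ Finset.Icc 1 ℓ).card) :
    ∃ p < G.card, nth G p = 2 * p + 1 := by
  by_contra! hodd
  obtain ⟨ℓ, -, -, hℓ⟩ := h
  have hG0 : 0 ∉ G := fun h0 => by simpa using hG h0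
  have hle := two_mul_card_filter_le (two_mul_add_two_le_nth hG0 hodd) ℓ
  have hsub : G ∩ Icc 1 ℓ ⊆ {x ∈ G | x ≤ ℓ} := fun x hx => by
    simp only [mem_inter, mem_Icc] at hx
    exact mem_filter.2 ⟨hx.1, hx.2.2⟩
  have := card_le_card hsub
  omega

/-- If 2·μ_G(ℓ) > ℓ for some 1 ≤ ℓ ≤ n, then g_p = 2p - 1 for some 1-based index p
(0-based: nth G p = 2p + 1). -/
theorem stmt_4 (n : ℕ) (G : Finset ℕ)
    (hG : G ⊆ Finset.Icc 1 n) (hGne : G.Nonempty)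
    (h : ∃ ℓ, 1 ≤ ℓ ∧ ℓ ≤ n ∧ ℓ < 2 * (G ∩ Finset.Icc 1 ℓ).card) :
    ∃ p < G.card, nth G p = 2 * p + 1 :=
  stmt_4_general n G hG h
end

section
/- Let k ≥ 2, let G = {g_1 < ... < g_r} ⊆ [n] with g_1 ≥ 2, and fix i ∈ [r]. Let G_i = {1} ∪ {i+1, i+2, ..., g_i}. Suppose S = {s_1 < ... < s_k} ⊆ [n] satisfies s_1 ≥ 2 and s_i ≥ g_i + 1. Then for every ℓ with 1 ≤ ℓ ≤ n, |S ∩ [ℓ]| + |G_i ∩ [ℓ]| ≤ ℓ. -/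
open Finset

theorem nth_zero_le {A : Finset ℕ} {x : ℕ} (hx : x ∈ A) : nth A 0 ≤ x := by
  rw [nth_eq_nat_nth, Nat.nth_zero]
  exact Nat.sInf_le hx

/-- The paper's μ_X(ℓ). -/
def prefixCard (X : Finset ℕ) (ℓ : ℕ) : ℕ := #(X ∩ Icc 1 ℓ)

theorem prefixCard_le_of_lt_nth {X : Finset ℕ} {j ℓ : ℕ} (h : ℓ < nth X j) :
    prefixCard X ℓ ≤ j := by
  rw [nth_eq_nat_nth] at h
  calc prefixCard X ℓ ≤ #{x ∈ range (ℓ + 1) | x ∈ X} :=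
        card_le_card fun x hx => by simp only [mem_inter, mem_Icc] at hx; simp [hx.1, hx.2.2]
    _ = Nat.count (· ∈ X) (ℓ + 1) := (Nat.count_eq_card_filter_range _ _).symm
    _ ≤ j := Nat.le_nth_of_count_le h

theorem prefixCard_le_sub_one {X : Finset ℕ} (hX : ∀ x ∈ X, 2 ≤ x) (ℓ : ℕ) :
    prefixCard X ℓ ≤ ℓ - 1 :=
  calc prefixCard X ℓ ≤ #(Icc 2 ℓ) :=
        card_le_card fun x hx => by
          simp only [mem_inter, mem_Icc] at hx ⊢; exact ⟨hX x hx.1, hx.2.2⟩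
    _ = ℓ - 1 := by simp only [Nat.card_Icc]; omega

theorem prefixCard_le_add_sub (X : Finset ℕ) (m ℓ : ℕ) :
    prefixCard X ℓ ≤ prefixCard X m + (ℓ - m) :=
  calc prefixCard X ℓ ≤ #((X ∩ Icc 1 m) ∪ Icc (m + 1) ℓ) :=
        card_le_card fun x hx => by
          simp only [mem_inter, mem_union, mem_Icc] at hx ⊢
          by_cases hxm : x ≤ m
          · exact .inl ⟨hx.1, hx.2.1, hxm⟩
          · exact .inr ⟨by omega, hx.2.2⟩
    _ ≤ prefixCard X m + (ℓ - m) := by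
        simpa only [prefixCard, Nat.card_Icc, Nat.add_sub_add_right] using
          card_union_le (X ∩ Icc 1 m) (Icc (m + 1) ℓ)

theorem prefixCard_insert_one_Icc {a b ℓ : ℕ} (ha : 2 ≤ a) (hℓ : 1 ≤ ℓ) :
    prefixCard (insert 1 (Icc a b)) ℓ = min b ℓ + 1 - a + 1 := by
  have hIcc : Icc a b ∩ Icc 1 ℓ = Icc a (min b ℓ) := by
    ext x; simp only [mem_inter, mem_Icc]; omega
  rw [prefixCard, insert_inter_of_mem (by simpa using hℓ), hIcc,
    card_insert_of_notMem (s := Icc a (min b ℓ)) (by simp only [mem_Icc]; omega), Nat.card_Icc]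

/-- Indices are 0-based: `nth G i` is the paper's g_{i+1}. -/
theorem stmt_5_general (n : ℕ) (G S : Finset ℕ) (i : ℕ) (hs1 : 2 ≤ nth S 0)
    (hsi : nth G i + 1 ≤ nth S i) :
    ∀ ℓ, 1 ≤ ℓ → ℓ ≤ n →
      (S ∩ Finset.Icc 1 ℓ).card
        + ((insert 1 (Finset.Icc (i + 2) (nth G i))) ∩ Finset.Icc 1 ℓ).card ≤ ℓ := by
  intro ℓ hℓ _
  change prefixCard S ℓ + prefixCard _ ℓ ≤ ℓ
  have hGi := prefixCard_insert_one_Icc (a := i + 2) (b := nth G i) (by omega) hℓ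
  have hSℓ := prefixCard_le_sub_one (fun x hx => hs1.trans (nth_zero_le hx)) ℓ
  rcases le_or_gt ℓ (nth G i) with hℓg | hgℓ
  · have := prefixCard_le_of_lt_nth (show ℓ < nth S i by omega)
    omega
  · have := prefixCard_le_add_sub S (nth G i) ℓ
    have := prefixCard_le_of_lt_nth (show nth G i < nth S i by omega)
    omega

/-- If g_1 ≥ 2, i ∈ [r] (0-based index i here), S is a k-set with s_1 ≥ 2 and
s_i ≥ g_i + 1, then S and G_i = {1} ∪ [i+1, g_i] are not strongly intersecting:
μ_S(ℓ) + μ_{G_i}(ℓ) ≤ ℓ for all 1 ≤ ℓ ≤ n. -/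
theorem stmt_5 (n k : ℕ) (hk : 2 ≤ k) (G S : Finset ℕ)
    (hG : G ⊆ Finset.Icc 1 n) (hS : S ⊆ Finset.Icc 1 n)
    (hGne : G.Nonempty) (hg1 : 2 ≤ nth G 0)
    (i : ℕ) (hi : i < G.card) (hik : i < k)
    (hScard : S.card = k) (hs1 : 2 ≤ nth S 0)
    (hsi : nth G i + 1 ≤ nth S i) :
    ∀ ℓ, 1 ≤ ℓ → ℓ ≤ n →
      (S ∩ Finset.Icc 1 ℓ).card
        + ((insert 1 (Finset.Icc (i + 2) (nth G i))) ∩ Finset.Icc 1 ℓ).card ≤ ℓ :=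
  stmt_5_general n G S i hs1 hsi
end

section
/- For positive integers a ≤ b, the number of sets S = {s_1 < ... < s_{b−a+1}} of positive integers satisfying s_j ≤ a + j − 1 for all j (i.e., S ≤ {a, a+1, ..., b} coordinatewise) equals the binomial coefficient C(b, a−1). -/
/-!
Every `(b - a + 1)`-subset `S` of `[1, b]` already satisfies the constraint: the elements of `S`
from position `j` on are `b - a + 1 - j` distinct integers, all at least `nth S j` and at most `b`,
so `nth S j ≤ a + j`. The count is therefore `C(b, b - a + 1) = C(b, a - 1)`.
-/

theorem List.SortedLT.getElem_add_le_getElem {l : List ℕ} (hl : l.SortedLT) {i : ℕ} :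
    ∀ d (hd : i + d < l.length), l[i] + d ≤ l[i + d] := by
  intro d
  induction d with
  | zero => simp
  | succ d ih =>
    intro hd
    have hstep : l[i + d] < l[i + d + 1] :=
      (hl.getElem_lt_getElem_iff (hi := by omega) (hj := hd)).mpr (by omega)
    have := ih (by omega)
    show l[i] + (d + 1) ≤ l[i + d + 1]
    omega

theorem nth_add_card_le {S : Finset ℕ} {n j : ℕ} (hS : ∀ x ∈ S, x ≤ n) (hj : j < S.card) :
    nth S j + S.card ≤ n + j + 1 := by
  have hlen : (S.sort (· ≤ ·)).length = S.card := S.length_sort _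
  have hlast : j + (S.card - 1 - j) < (S.sort (· ≤ ·)).length := by omega
  have hnth : nth S j = (S.sort (· ≤ ·))[j] := List.getD_eq_getElem _ 0 (by omega)
  have hgap := S.sortedLT_sort.getElem_add_le_getElem _ hlast
  have hmem := hS _ ((S.mem_sort _).mp (List.getElem_mem hlast))
  omega

/-- The number of sets S of positive integers with |S| = b - a + 1 and
s_j ≤ a + j - 1 (1-based; i.e. nth S j ≤ a + j 0-based) equals C(b, a-1).
All such sets are subsets of [b]. -/
theorem stmt_8 (a b : ℕ) (ha : 1 ≤ a) (hab : a ≤ b) :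
    ((Finset.Icc 1 b).powerset.filter
      (fun S => S.card = b - a + 1 ∧ ∀ j < b - a + 1, nth S j ≤ a + j)).card
      = Nat.choose b (a - 1) := by
  have hconstraint : ∀ S ∈ (Finset.Icc 1 b).powerset,
      (S.card = b - a + 1 ∧ ∀ j < b - a + 1, nth S j ≤ a + j) ↔ S.card = b - a + 1 := by
    intro S hS
    refine ⟨And.left, fun hcard => ⟨hcard, fun j hj => ?_⟩⟩
    have := nth_add_card_le (n := b) (fun x hx => (Finset.mem_Icc.mp
      (Finset.mem_powerset.mp hS hx)).2) (hcard ▸ hj)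
    omega
  rw [Finset.filter_congr hconstraint, ← Finset.powersetCard_eq_filter,
    Finset.card_powersetCard, Nat.card_Icc, Nat.add_sub_cancel,
    show b - a + 1 = b - (a - 1) by omega, Nat.choose_symm (by omega)]
end

section
/- Let n ≥ 2k ≥ 4 and 4 ≤ b ≤ k+1. The number of k-subsets S = {s_1 < ... < s_k} of [n] with s_1 = 1 and s_j ≤ j + 1 for all 2 ≤ j ≤ b−1 (i.e., S ⪯ {1} ∪ [3,b]) equals (b−1)·C(n−b, k−b+1) + C(n−b, k−b). -/
open Finset

theorem nth_le_iff_lt_card_filter {S : Finset ℕ} {j : ℕ} (hj : j < #S) (m : ℕ) :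
    nth S j ≤ m ↔ j < #{x ∈ S | x ≤ m} := by
  set f := S.orderEmbOfFin rfl
  set i₀ : Fin #S := ⟨j, hj⟩
  have hnth : nth S j = f i₀ := by
    have hl : j < (S.sort (· ≤ ·)).length := by simpa using hj
    simp [nth, f, i₀, orderEmbOfFin_apply, List.getElem?_eq_getElem hl]
  have hcard : #{x ∈ S | x ≤ m} = #({i | f i ≤ m} : Finset (Fin #S)) := by
    conv_lhs => rw [← S.map_orderEmbOfFin_univ rfl]
    rw [filter_map, card_map]
    rfl
  rw [hnth, hcard]
  constructor
  · intro h
    calc j < #(Iic i₀) := by simp [i₀]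
      _ ≤ _ := card_le_card fun i hi => by
        simp only [mem_Iic, mem_filter, mem_univ, true_and] at hi ⊢
        exact (f.monotone hi).trans h
  · intro h
    by_contra! hlt
    have hsub : ({i | f i ≤ m} : Finset (Fin #S)) ⊆ Iio i₀ := fun i hi => by
      simp only [mem_Iio, mem_filter, mem_univ, true_and] at hi ⊢
      by_contra! hji
      exact absurd (f.monotone hji) (by omega)
    simpa [i₀] using (card_le_card hsub).trans_lt' h

theorem nth_zero_eq_one_iff {S : Finset ℕ} (h0 : 0 ∉ S) (hS : S.Nonempty) :
    nth S 0 = 1 ↔ 1 ∈ S := by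
  have hle_one : nth S 0 ≤ 1 ↔ 1 ∈ S := by
    rw [nth_le_iff_lt_card_filter hS.card_pos, card_pos, filter_nonempty_iff]
    constructor
    · rintro ⟨x, hx, hx1⟩
      obtain rfl | rfl := Nat.le_one_iff_eq_zero_or_eq_one.mp hx1
      exacts [absurd hx h0, hx]
    · exact fun h => ⟨1, h, le_rfl⟩
  have hpos : ¬ nth S 0 ≤ 0 := by
    rw [nth_le_iff_lt_card_filter hS.card_pos, card_pos, filter_nonempty_iff]
    rintro ⟨x, hx, hx0⟩
    exact h0 (Nat.le_zero.mp hx0 ▸ hx)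
  rw [← hle_one]
  omega

theorem card_filter_le_le_card_filter_le_add (S : Finset ℕ) (m b : ℕ) :
    #{x ∈ S | x ≤ b} ≤ #{x ∈ S | x ≤ m} + (b - m) := by
  calc #{x ∈ S | x ≤ b} ≤ #({x ∈ S | x ≤ m} ∪ Ioc m b) := card_le_card fun x hx => by
        simp only [mem_filter, mem_union, mem_Ioc] at hx ⊢
        rcases le_or_gt x m with h | h
        exacts [Or.inl ⟨hx.1, h⟩, Or.inr ⟨h, hx.2⟩]
    _ ≤ _ := (card_union_le _ _).trans_eq (by rw [Nat.card_Ioc])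

/-- Only the constraint at `j = b - 2` matters: lowering the threshold by one loses at most one
element of `S`. -/
theorem forall_nth_le_add_two_iff {S : Finset ℕ} {b : ℕ} (hb : b ≤ #S + 1) :
    (∀ j < b - 1, nth S j ≤ j + 2) ↔ b - 1 ≤ #{x ∈ S | x ≤ b} := by
  constructor
  · intro h
    rcases Nat.lt_or_ge b 2 with hb2 | hb2
    · omega
    · have := (nth_le_iff_lt_card_filter (j := b - 2) (by omega) _).mp (h (b - 2) (by omega))
      rw [show b - 2 + 2 = b by omega] at this
      omega
  · intro h j hj
    rw [nth_le_iff_lt_card_filter (by omega)]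
    have := card_filter_le_le_card_filter_le_add S (j + 2) b
    omega

section

variable {α : Type*} [DecidableEq α] {I J T : Finset α}

theorem mem_insert_image_erase_iff {a : α} (ha : a ∈ I) (hT : T ⊆ I) :
    T ∈ insert I ((I.erase a).image I.erase) ↔ a ∈ T ∧ #I - 1 ≤ #T := by
  simp only [mem_insert, mem_image, mem_erase]
  constructor
  · rintro (rfl | ⟨m, ⟨hma, hm⟩, rfl⟩)
    · exact ⟨ha, by omega⟩
    · exact ⟨mem_erase.mpr ⟨Ne.symm hma, ha⟩, by rw [card_erase_of_mem hm]⟩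
  · rintro ⟨haT, hcard⟩
    rcases (card_le_card hT).eq_or_lt with heq | hlt
    · exact Or.inl (eq_of_subset_of_card_le hT heq.ge)
    · obtain ⟨m, hmT, rfl⟩ := exists_eq_insert_iff.mpr ⟨hT, by omega⟩
      exact Or.inr ⟨m, ⟨fun h => hmT (h ▸ haT), mem_insert_self m T⟩, erase_insert hmT⟩

theorem card_filter_mem_and_eq_sum {ι M : Type*} [DecidableEq M] (s : Finset ι) (f : ι → M)
    (t : Finset M) (p : ι → Prop) [DecidablePred p] :
    #{x ∈ s | f x ∈ t ∧ p x} = ∑ y ∈ t, #{x ∈ s | f x = y ∧ p x} := by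
  rw [card_eq_sum_card_fiberwise fun x hx => (mem_filter.mp hx).2.1]
  refine sum_congr rfl fun y hy => ?_
  rw [filter_filter]
  congr 1
  refine filter_congr fun x _ => ⟨fun ⟨⟨_, hp⟩, hxy⟩ => ⟨hxy, hp⟩, ?_⟩
  rintro ⟨rfl, hp⟩
  exact ⟨⟨hy, hp⟩, rfl⟩

theorem card_filter_inter_eq_and_card_eq {k l : ℕ} (hIJ : Disjoint I J) (hT : T ⊆ I)
    (hk : #T + l = k) :
    #{S ∈ (I ∪ J).powerset | S ∩ I = T ∧ #S = k} = (#J).choose l := by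
  subst hk
  have hUI {U : Finset α} (hU : U ⊆ J) : Disjoint U I := hIJ.symm.mono_left hU
  rw [← card_powersetCard]
  refine card_nbij' (· \ I) (T ∪ ·) ?_ ?_ ?_ ?_
  · intro S hS
    simp only [coe_filter, mem_powerset, Set.mem_ofPred_eq, mem_coe, mem_powersetCard] at hS ⊢
    obtain ⟨hSIJ, hSI, hcard⟩ := hS
    refine ⟨sdiff_le_iff.mpr hSIJ, ?_⟩
    have := card_sdiff_add_card_inter S I
    rw [hSI] at this
    omega
  · intro U hU
    simp only [coe_filter, mem_powerset, Set.mem_ofPred_eq, mem_coe, mem_powersetCard] at hU ⊢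
    refine ⟨union_subset_union hT hU.1, ?_, ?_⟩
    · rw [union_inter_distrib_right, inter_eq_left.mpr hT,
        disjoint_iff_inter_eq_empty.mp (hUI hU.1), union_empty]
    · rw [card_union_of_disjoint ((hUI hU.1).symm.mono_left hT), hU.2]
  · intro S hS
    simp only [coe_filter, mem_powerset, Set.mem_ofPred_eq] at hS
    show T ∪ S \ I = S
    rw [← hS.2.1, union_comm, sdiff_union_inter]
  · intro U hU
    rw [mem_coe, mem_powersetCard] at hU
    show (T ∪ U) \ I = U
    rw [union_sdiff_distrib, sdiff_eq_empty_iff_subset.mpr hT, empty_union,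
      sdiff_eq_self_of_disjoint (hUI hU.1)]

/-- The symmetric form `(#J).choose (#I + #J - k)` vanishes when `k < #I`, where
`(#J).choose (k - #I)` would truncate to `(#J).choose 0 = 1`. -/
theorem card_filter_inter_eq_self_and_card_eq {k : ℕ} (hIJ : Disjoint I J) (hk : k ≤ #I + #J) :
    #{S ∈ (I ∪ J).powerset | S ∩ I = I ∧ #S = k} = (#J).choose (#I + #J - k) := by
  by_cases hIk : #I ≤ k
  · rw [card_filter_inter_eq_and_card_eq hIJ subset_rfl (l := k - #I) (by omega)]
    exact Nat.choose_symm_of_eq_add (by omega)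
  · rw [Nat.choose_eq_zero_of_lt (by omega), card_eq_zero, filter_eq_empty_iff]
    rintro S - ⟨hSI, hS⟩
    have := card_le_card (hSI ▸ inter_subset_left : I ⊆ S)
    omega

theorem card_filter_inter_mem_insert_image_erase_and_card_eq {k : ℕ} {a : α}
    (hIJ : Disjoint I J) (ha : a ∈ I) (hI : #I ≤ k + 1) (hk : k ≤ #I + #J) :
    #{S ∈ (I ∪ J).powerset | S ∩ I ∈ insert I ((I.erase a).image I.erase) ∧ #S = k} =
      (#I - 1) * (#J).choose (k + 1 - #I) + (#J).choose (#I + #J - k) := by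
  have hfiber_erase : ∀ m ∈ I.erase a,
      #{S ∈ (I ∪ J).powerset | S ∩ I = I.erase m ∧ #S = k} = (#J).choose (k + 1 - #I) := by
    intro m hm
    refine card_filter_inter_eq_and_card_eq hIJ (erase_subset m I) ?_
    have := card_pos.mpr ⟨a, ha⟩
    rw [card_erase_of_mem (mem_of_mem_erase hm)]
    omega
  have hI_notMem : I ∉ (I.erase a).image I.erase := fun h => by
    obtain ⟨m, hm, hIm⟩ := mem_image.mp h
    exact notMem_erase m I (by rw [hIm]; exact mem_of_mem_erase hm)
  rw [card_filter_mem_and_eq_sum, sum_insert hI_notMem,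
    sum_image ((erase_injOn I).mono (erase_subset a I)), sum_congr rfl hfiber_erase, sum_const,
    card_erase_of_mem ha, smul_eq_mul, card_filter_inter_eq_self_and_card_eq hIJ hk, add_comm]

end

theorem nth_condition_iff_inter_mem {S : Finset ℕ} {b : ℕ} (h0 : 0 ∉ S) (hS : S.Nonempty)
    (hb : 1 ≤ b) (hbS : b ≤ #S + 1) :
    (nth S 0 = 1 ∧ ∀ j < b - 1, 1 ≤ j → nth S j ≤ j + 2) ↔
      S ∩ Icc 1 b ∈ insert (Icc 1 b) (((Icc 1 b).erase 1).image (Icc 1 b).erase) := by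
  have hfilter : {x ∈ S | x ≤ b} = S ∩ Icc 1 b := by
    ext x
    simp only [mem_filter, mem_inter, mem_Icc]
    constructor
    · rintro ⟨hx, hxb⟩
      exact ⟨hx, Nat.one_le_iff_ne_zero.mpr fun h => h0 (h ▸ hx), hxb⟩
    · rintro ⟨hx, -, hxb⟩
      exact ⟨hx, hxb⟩
  rw [mem_insert_image_erase_iff (by simpa) inter_subset_right, ← hfilter, Nat.card_Icc,
    mem_filter, ← nth_zero_eq_one_iff h0 hS, Nat.add_sub_cancel, ← forall_nth_le_add_two_iff hbS]
  constructor
  · rintro ⟨hnth0, h⟩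
    refine ⟨⟨hnth0, by omega⟩, fun j hj => ?_⟩
    rcases j.eq_zero_or_pos with rfl | hj1
    exacts [by omega, h j hj hj1]
  · exact fun ⟨⟨hnth0, _⟩, h⟩ => ⟨hnth0, fun j hj _ => h j hj⟩

theorem stmt_13_general (n k b : ℕ) (hn : 2 * k ≤ n)
    (hb : 4 ≤ b) (hbk : b ≤ k + 1) :
    ((Finset.Icc 1 n).powerset.filter
      (fun (S : Finset ℕ) => S.card = k ∧ nth S 0 = 1 ∧ ∀ j < b - 1, 1 ≤ j → nth S j ≤ j + 2)).card
    = (b - 1) * Nat.choose (n - b) (k + 1 - b) + Nat.choose (n - b) (n - k) := by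
  have hIJ : Disjoint (Icc 1 b) (Icc (b + 1) n) := disjoint_left.mpr fun x hxI hxJ => by
    rw [mem_Icc] at hxI hxJ
    omega
  have hIcc : Icc 1 n = Icc 1 b ∪ Icc (b + 1) n := by
    ext x
    simp only [mem_union, mem_Icc]
    omega
  have hcond : ∀ S ∈ (Icc 1 n).powerset,
      (#S = k ∧ nth S 0 = 1 ∧ ∀ j < b - 1, 1 ≤ j → nth S j ≤ j + 2) ↔
        (S ∩ Icc 1 b ∈ insert (Icc 1 b) (((Icc 1 b).erase 1).image (Icc 1 b).erase) ∧ #S = k) := by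
    intro S hS
    rw [and_comm, and_congr_left_iff]
    intro hcard
    exact nth_condition_iff_inter_mem (fun h => by simpa using mem_powerset.mp hS h)
      (card_pos.mp (by omega)) (by omega) (by omega)
  have hIcard : #(Icc 1 b) = b := by simp
  have hJcard : #(Icc (b + 1) n) = n - b := by simp
  rw [filter_congr hcond, hIcc, card_filter_inter_mem_insert_image_erase_and_card_eq hIJ
    (left_mem_Icc.mpr (by omega)) (by omega) (by omega), hIcard, hJcard,
    Nat.add_sub_cancel' (by omega : b ≤ n)]

/-- |F({1}∪[3,b])| = (b-1)·C(n-b, k-b+1) + C(n-b, k-b): the number of k-subsets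
S of [n] with s₁ = 1 and s_j ≤ j+1 for 2 ≤ j ≤ b-1 (0-based: nth S 0 = 1 and
nth S j ≤ j+2 for 1 ≤ j < b-1). C(n-b, k-b) is written as C(n-b, n-k) (equal
by symmetry, and 0 when b = k+1, matching C(n-b, -1) = 0). -/
theorem stmt_13 (n k b : ℕ) (hn : 2 * k ≤ n) (hk : 2 ≤ k)
    (hb : 4 ≤ b) (hbk : b ≤ k + 1) :
    ((Finset.Icc 1 n).powerset.filter
      (fun (S : Finset ℕ) => S.card = k ∧ nth S 0 = 1 ∧ ∀ j < b - 1, 1 ≤ j → nth S j ≤ j + 2)).card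
    = (b - 1) * Nat.choose (n - b) (k + 1 - b) + Nat.choose (n - b) (n - k) :=
  stmt_13_general n k b hn hb hbk
end
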